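/- arXiv:1405.7531 — 4 statements merged into one kernel-verified Lean document; each statement's English description precedes it below -/
import Mathlib

section
/- Let a, b > 0 and E ≥ 0. Define N^D(E) = #{(l, m) ∈ ℤ² : l ≥ 1, m ≥ 1, π²l²/a² + π²m²/b² ≤ E}, P(R) = #{(l, m) ∈ ℤ² : l²/a² + m²/b² ≤ R²}, and the area error G(E) = (1/4)·(P(√E/π) − (ab/π)·E). Then |N^D(E) − ((ab/(4π))·E − ((a+b)/(2π))·√E + G(E))| ≤ 1. In other words, the Dirichlet counting function of the rectangle [0,a]×[0,b] equals (1/(4π))·vol₂(Q)·E − (1/(4π))·vol₁(∂Q)·√E + G(E) up to an error bounded by an absolute constant. -/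
open Real

/-- The Dirichlet eigenvalue counting function of the rectangle `[0,a] × [0,b]`:
the number of pairs of positive integers `(l, m)` with `π²l²/a² + π²m²/b² ≤ E`. -/
noncomputable def dirichletCount (a b E : ℝ) : ℕ :=
  Set.ncard {p : ℤ × ℤ | 1 ≤ p.1 ∧ 1 ≤ p.2 ∧
    Real.pi ^ 2 * (p.1 : ℝ) ^ 2 / a ^ 2 + Real.pi ^ 2 * (p.2 : ℝ) ^ 2 / b ^ 2 ≤ E}

/-- The number of integer lattice points `(l, m)` with `l²/a² + m²/b² ≤ R²`. -/
noncomputable def fullEllipseCount (a b R : ℝ) : ℕ :=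
  Set.ncard {p : ℤ × ℤ |
    (p.1 : ℝ) ^ 2 / a ^ 2 + (p.2 : ℝ) ^ 2 / b ^ 2 ≤ R ^ 2}

/-- The area error `G(E) = (1/4)(P(√E/π) − (ab/π) E)`. -/
noncomputable def areaError (a b E : ℝ) : ℝ :=
  (1 / 4) * ((fullEllipseCount a b (Real.sqrt E / Real.pi) : ℝ) -
    (a * b / Real.pi) * E)

private lemma inj_neg1 : Function.Injective (fun p : ℤ × ℤ => (-p.1, p.2)) := by
  intro p q h
  simp only [Prod.mk.injEq, neg_inj] at h
  exact Prod.ext h.1 h.2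

private lemma inj_neg2 : Function.Injective (fun p : ℤ × ℤ => (p.1, -p.2)) := by
  intro p q h
  simp only [Prod.mk.injEq, neg_inj] at h
  exact Prod.ext h.1 h.2

private lemma ncard_union3 {α : Type*} {A B C : Set α} (hA : A.Finite) (hB : B.Finite)
    (hC : C.Finite) (hAB : Disjoint A B) (hAC : Disjoint A C) (hBC : Disjoint B C) :
    (A ∪ B ∪ C).ncard = A.ncard + B.ncard + C.ncard := by
  rw [Set.ncard_union_eq (Set.disjoint_union_left.mpr ⟨hAC, hBC⟩) (hA.union hB) hC,
      Set.ncard_union_eq hAB hA hB]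

private lemma axis_count (c R : ℝ) (hc : 0 < c) (hR : 0 ≤ R) :
    {l : ℤ | 1 ≤ l ∧ (l : ℝ) ^ 2 / c ^ 2 ≤ R ^ 2} = ↑(Finset.Icc (1 : ℤ) ⌊c * R⌋) := by
  ext l
  simp only [Set.mem_setOf_eq, Finset.coe_Icc, Set.mem_Icc]
  constructor
  · rintro ⟨h1, h2⟩
    refine ⟨h1, Int.le_floor.2 ?_⟩
    rw [div_le_iff₀ (by positivity)] at h2
    have hl1 : (1 : ℝ) ≤ (l : ℝ) := by exact_mod_cast h1
    nlinarith [mul_nonneg hc.le hR]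
  · rintro ⟨h1, h2⟩
    refine ⟨h1, ?_⟩
    have h2' : (l : ℝ) ≤ c * R := Int.le_floor.1 h2
    have hl1 : (1 : ℝ) ≤ (l : ℝ) := by exact_mod_cast h1
    rw [div_le_iff₀ (by positivity)]
    nlinarith

private lemma count_partition (a b R : ℝ) (ha : 0 < a) (hb : 0 < b) (hR : 0 ≤ R) :
    {p : ℤ × ℤ | (p.1 : ℝ) ^ 2 / a ^ 2 + (p.2 : ℝ) ^ 2 / b ^ 2 ≤ R ^ 2}.ncard =
      4 * {p : ℤ × ℤ | ((p.1 : ℝ) ^ 2 / a ^ 2 + (p.2 : ℝ) ^ 2 / b ^ 2 ≤ R ^ 2) ∧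
            1 ≤ p.1 ∧ 1 ≤ p.2}.ncard
        + 2 * (⌊a * R⌋).toNat + 2 * (⌊b * R⌋).toNat + 1 := by
  set S : Set (ℤ × ℤ) := {p : ℤ × ℤ | (p.1 : ℝ) ^ 2 / a ^ 2 + (p.2 : ℝ) ^ 2 / b ^ 2 ≤ R ^ 2}
    with hS
  -- finiteness
  have hSfin : S.Finite := by
    apply Set.Finite.subset
      ((Set.finite_Icc (-⌈a * R⌉) ⌈a * R⌉).prod (Set.finite_Icc (-⌈b * R⌉) ⌈b * R⌉))
    intro p hp
    simp only [hS, Set.mem_setOf_eq] at hp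
    have hb2 : (0 : ℝ) ≤ (p.2 : ℝ) ^ 2 / b ^ 2 := by positivity
    have ha2 : (0 : ℝ) ≤ (p.1 : ℝ) ^ 2 / a ^ 2 := by positivity
    have h1 : (p.1 : ℝ) ^ 2 / a ^ 2 ≤ R ^ 2 := by linarith
    have h2 : (p.2 : ℝ) ^ 2 / b ^ 2 ≤ R ^ 2 := by linarith
    rw [div_le_iff₀ (by positivity)] at h1 h2
    have habs1 : |(p.1 : ℝ)| ≤ a * R := by
      rw [← Real.sqrt_sq (by positivity : (0:ℝ) ≤ a * R), ← Real.sqrt_sq_eq_abs]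
      exact Real.sqrt_le_sqrt (by nlinarith)
    have habs2 : |(p.2 : ℝ)| ≤ b * R := by
      rw [← Real.sqrt_sq (by positivity : (0:ℝ) ≤ b * R), ← Real.sqrt_sq_eq_abs]
      exact Real.sqrt_le_sqrt (by nlinarith)
    rw [abs_le] at habs1 habs2
    constructor
    · constructor
      · have : -(⌈a * R⌉ : ℝ) ≤ (p.1 : ℝ) := by
          have := Int.le_ceil (a * R); linarith [habs1.1]
        exact_mod_cast this
      · have : (p.1 : ℝ) ≤ (⌈a * R⌉ : ℝ) := le_trans habs1.2 (Int.le_ceil _)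
        exact_mod_cast this
    · constructor
      · have : -(⌈b * R⌉ : ℝ) ≤ (p.2 : ℝ) := by
          have := Int.le_ceil (b * R); linarith [habs2.1]
        exact_mod_cast this
      · have : (p.2 : ℝ) ≤ (⌈b * R⌉ : ℝ) := le_trans habs2.2 (Int.le_ceil _)
        exact_mod_cast this
  have hfin : ∀ T : Set (ℤ × ℤ), T ⊆ S → T.Finite := fun T h => hSfin.subset h
  -- symmetries
  have hsymm1 : ∀ p : ℤ × ℤ, ((-p.1, p.2) ∈ S) ↔ p ∈ S := by
    intro p
    simp only [hS, Set.mem_setOf_eq]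
    push_cast
    rw [neg_pow, show ((-1:ℝ))^2 = 1 by norm_num, one_mul]
  have hsymm2 : ∀ p : ℤ × ℤ, ((p.1, -p.2) ∈ S) ↔ p ∈ S := by
    intro p
    simp only [hS, Set.mem_setOf_eq]
    push_cast
    rw [neg_pow, show ((-1:ℝ))^2 = 1 by norm_num, one_mul]
  -- reflected counts
  have hQpn : {p : ℤ × ℤ | p ∈ S ∧ 1 ≤ p.1 ∧ p.2 ≤ -1}.ncard
      = {p : ℤ × ℤ | p ∈ S ∧ 1 ≤ p.1 ∧ 1 ≤ p.2}.ncard := by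
    have himg : {p : ℤ × ℤ | p ∈ S ∧ 1 ≤ p.1 ∧ p.2 ≤ -1}
        = (fun p : ℤ × ℤ => (p.1, -p.2)) '' {p : ℤ × ℤ | p ∈ S ∧ 1 ≤ p.1 ∧ 1 ≤ p.2} := by
      ext p
      simp only [Set.mem_image, Set.mem_setOf_eq]
      constructor
      · rintro ⟨hp, h1, h2⟩
        exact ⟨(p.1, -p.2), ⟨(hsymm2 p).mpr hp, h1, by omega⟩, by simp⟩
      · rintro ⟨q, ⟨hq, h1, h2⟩, rfl⟩
        exact ⟨(hsymm2 q).mpr hq, h1, by omega⟩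
    rw [himg, Set.ncard_image_of_injective _ inj_neg2]
  have hSneg : {p : ℤ × ℤ | p ∈ S ∧ p.1 ≤ -1}.ncard
      = {p : ℤ × ℤ | p ∈ S ∧ 1 ≤ p.1}.ncard := by
    have himg : {p : ℤ × ℤ | p ∈ S ∧ p.1 ≤ -1}
        = (fun p : ℤ × ℤ => (-p.1, p.2)) '' {p : ℤ × ℤ | p ∈ S ∧ 1 ≤ p.1} := by
      ext p
      simp only [Set.mem_image, Set.mem_setOf_eq]
      constructor
      · rintro ⟨hp, h1⟩
        exact ⟨(-p.1, p.2), ⟨(hsymm1 p).mpr hp, by omega⟩, by simp⟩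
      · rintro ⟨q, ⟨hq, h1⟩, rfl⟩
        exact ⟨(hsymm1 q).mpr hq, by omega⟩
    rw [himg, Set.ncard_image_of_injective _ inj_neg1]
  have hYn : {p : ℤ × ℤ | p ∈ S ∧ p.1 = 0 ∧ p.2 ≤ -1}.ncard
      = {p : ℤ × ℤ | p ∈ S ∧ p.1 = 0 ∧ 1 ≤ p.2}.ncard := by
    have himg : {p : ℤ × ℤ | p ∈ S ∧ p.1 = 0 ∧ p.2 ≤ -1}
        = (fun p : ℤ × ℤ => (p.1, -p.2)) '' {p : ℤ × ℤ | p ∈ S ∧ p.1 = 0 ∧ 1 ≤ p.2} := by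
      ext p
      simp only [Set.mem_image, Set.mem_setOf_eq]
      constructor
      · rintro ⟨hp, h1, h2⟩
        exact ⟨(p.1, -p.2), ⟨(hsymm2 p).mpr hp, h1, by omega⟩, by simp⟩
      · rintro ⟨q, ⟨hq, h1, h2⟩, rfl⟩
        exact ⟨(hsymm2 q).mpr hq, h1, by omega⟩
    rw [himg, Set.ncard_image_of_injective _ inj_neg2]
  -- axis counts
  have hXp : {p : ℤ × ℤ | p ∈ S ∧ 1 ≤ p.1 ∧ p.2 = 0}.ncard = (⌊a * R⌋).toNat := by
    have himg : {p : ℤ × ℤ | p ∈ S ∧ 1 ≤ p.1 ∧ p.2 = 0}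
        = (fun l : ℤ => (l, (0 : ℤ))) '' {l : ℤ | 1 ≤ l ∧ (l : ℝ) ^ 2 / a ^ 2 ≤ R ^ 2} := by
      ext p
      simp only [Set.mem_image, Set.mem_setOf_eq, hS]
      constructor
      · rintro ⟨hp, h1, h2⟩
        refine ⟨p.1, ⟨h1, ?_⟩, ?_⟩
        · rw [h2] at hp
          push_cast at hp
          simpa using hp
        · exact Prod.ext rfl h2.symm
      · rintro ⟨l, ⟨h1, h2⟩, rfl⟩
        refine ⟨?_, h1, rfl⟩
        push_cast
        simpa using h2
    rw [himg, Set.ncard_image_of_injective _ (fun x y h => by simpa using h),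
      axis_count a R ha hR, Set.ncard_coe_finset, Int.card_Icc]
    omega
  have hYp : {p : ℤ × ℤ | p ∈ S ∧ p.1 = 0 ∧ 1 ≤ p.2}.ncard = (⌊b * R⌋).toNat := by
    have himg : {p : ℤ × ℤ | p ∈ S ∧ p.1 = 0 ∧ 1 ≤ p.2}
        = (fun m : ℤ => ((0 : ℤ), m)) '' {m : ℤ | 1 ≤ m ∧ (m : ℝ) ^ 2 / b ^ 2 ≤ R ^ 2} := by
      ext p
      simp only [Set.mem_image, Set.mem_setOf_eq, hS]
      constructor
      · rintro ⟨hp, h1, h2⟩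
        refine ⟨p.2, ⟨h2, ?_⟩, ?_⟩
        · rw [h1] at hp
          push_cast at hp
          simpa using hp
        · exact Prod.ext h1.symm rfl
      · rintro ⟨m, ⟨h1, h2⟩, rfl⟩
        refine ⟨?_, rfl, h1⟩
        push_cast
        simpa using h2
    rw [himg, Set.ncard_image_of_injective _ (fun x y h => by simpa using h),
      axis_count b R hb hR, Set.ncard_coe_finset, Int.card_Icc]
    omega
  have hO : {p : ℤ × ℤ | p ∈ S ∧ p.1 = 0 ∧ p.2 = 0}.ncard = 1 := by
    have : {p : ℤ × ℤ | p ∈ S ∧ p.1 = 0 ∧ p.2 = 0} = {((0 : ℤ), (0 : ℤ))} := by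
      ext p
      simp only [Set.mem_setOf_eq, Set.mem_singleton_iff, Prod.ext_iff]
      constructor
      · rintro ⟨_, h1, h2⟩; exact ⟨h1, h2⟩
      · rintro ⟨h1, h2⟩
        refine ⟨?_, h1, h2⟩
        simp only [hS, Set.mem_setOf_eq, h1, h2]
        push_cast
        norm_num
        positivity
    rw [this, Set.ncard_singleton]
  -- splits
  have hsplit1 : S = {p : ℤ × ℤ | p ∈ S ∧ 1 ≤ p.1} ∪ {p : ℤ × ℤ | p ∈ S ∧ p.1 ≤ -1}
      ∪ {p : ℤ × ℤ | p ∈ S ∧ p.1 = 0} := by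
    ext p
    simp only [Set.mem_union, Set.mem_setOf_eq]
    constructor
    · intro hp
      rcases (by omega : 1 ≤ p.1 ∨ p.1 ≤ -1 ∨ p.1 = 0) with h | h | h
      · exact Or.inl (Or.inl ⟨hp, h⟩)
      · exact Or.inl (Or.inr ⟨hp, h⟩)
      · exact Or.inr ⟨hp, h⟩
    · rintro ((h | h) | h) <;> exact h.1
  have hsplit2 : {p : ℤ × ℤ | p ∈ S ∧ 1 ≤ p.1}
      = {p : ℤ × ℤ | p ∈ S ∧ 1 ≤ p.1 ∧ 1 ≤ p.2} ∪ {p : ℤ × ℤ | p ∈ S ∧ 1 ≤ p.1 ∧ p.2 ≤ -1}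
        ∪ {p : ℤ × ℤ | p ∈ S ∧ 1 ≤ p.1 ∧ p.2 = 0} := by
    ext p
    simp only [Set.mem_union, Set.mem_setOf_eq]
    constructor
    · rintro ⟨hp, h1⟩
      rcases (by omega : 1 ≤ p.2 ∨ p.2 ≤ -1 ∨ p.2 = 0) with h | h | h
      · exact Or.inl (Or.inl ⟨hp, h1, h⟩)
      · exact Or.inl (Or.inr ⟨hp, h1, h⟩)
      · exact Or.inr ⟨hp, h1, h⟩
    · rintro ((h | h) | h) <;> exact ⟨h.1, h.2.1⟩
  have hsplit3 : {p : ℤ × ℤ | p ∈ S ∧ p.1 = 0}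
      = {p : ℤ × ℤ | p ∈ S ∧ p.1 = 0 ∧ 1 ≤ p.2} ∪ {p : ℤ × ℤ | p ∈ S ∧ p.1 = 0 ∧ p.2 ≤ -1}
        ∪ {p : ℤ × ℤ | p ∈ S ∧ p.1 = 0 ∧ p.2 = 0} := by
    ext p
    simp only [Set.mem_union, Set.mem_setOf_eq]
    constructor
    · rintro ⟨hp, h1⟩
      rcases (by omega : 1 ≤ p.2 ∨ p.2 ≤ -1 ∨ p.2 = 0) with h | h | h
      · exact Or.inl (Or.inl ⟨hp, h1, h⟩)
      · exact Or.inl (Or.inr ⟨hp, h1, h⟩)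
      · exact Or.inr ⟨hp, h1, h⟩
    · rintro ((h | h) | h) <;> exact ⟨h.1, h.2.1⟩
  -- ncard computations
  have step1 : S.ncard = {p : ℤ × ℤ | p ∈ S ∧ 1 ≤ p.1}.ncard
      + {p : ℤ × ℤ | p ∈ S ∧ p.1 ≤ -1}.ncard + {p : ℤ × ℤ | p ∈ S ∧ p.1 = 0}.ncard := by
    have h := congrArg Set.ncard hsplit1
    rw [h]
    exact ncard_union3 (hfin _ fun p hp => hp.1) (hfin _ fun p hp => hp.1)
      (hfin _ fun p hp => hp.1)
      (Set.disjoint_left.mpr (by rintro p ⟨_, h1⟩ ⟨_, h2⟩; omega))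
      (Set.disjoint_left.mpr (by rintro p ⟨_, h1⟩ ⟨_, h2⟩; omega))
      (Set.disjoint_left.mpr (by rintro p ⟨_, h1⟩ ⟨_, h2⟩; omega))
  have step2 : {p : ℤ × ℤ | p ∈ S ∧ 1 ≤ p.1}.ncard
      = {p : ℤ × ℤ | p ∈ S ∧ 1 ≤ p.1 ∧ 1 ≤ p.2}.ncard
        + {p : ℤ × ℤ | p ∈ S ∧ 1 ≤ p.1 ∧ p.2 ≤ -1}.ncard
        + {p : ℤ × ℤ | p ∈ S ∧ 1 ≤ p.1 ∧ p.2 = 0}.ncard := by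
    have h := congrArg Set.ncard hsplit2
    rw [h]
    exact ncard_union3 (hfin _ fun p hp => hp.1) (hfin _ fun p hp => hp.1)
      (hfin _ fun p hp => hp.1)
      (Set.disjoint_left.mpr (by rintro p ⟨_, _, h1⟩ ⟨_, _, h2⟩; omega))
      (Set.disjoint_left.mpr (by rintro p ⟨_, _, h1⟩ ⟨_, _, h2⟩; omega))
      (Set.disjoint_left.mpr (by rintro p ⟨_, _, h1⟩ ⟨_, _, h2⟩; omega))
  have step3 : {p : ℤ × ℤ | p ∈ S ∧ p.1 = 0}.ncard
      = {p : ℤ × ℤ | p ∈ S ∧ p.1 = 0 ∧ 1 ≤ p.2}.ncard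
        + {p : ℤ × ℤ | p ∈ S ∧ p.1 = 0 ∧ p.2 ≤ -1}.ncard
        + {p : ℤ × ℤ | p ∈ S ∧ p.1 = 0 ∧ p.2 = 0}.ncard := by
    have h := congrArg Set.ncard hsplit3
    rw [h]
    exact ncard_union3 (hfin _ fun p hp => hp.1) (hfin _ fun p hp => hp.1)
      (hfin _ fun p hp => hp.1)
      (Set.disjoint_left.mpr (by rintro p ⟨_, _, h1⟩ ⟨_, _, h2⟩; omega))
      (Set.disjoint_left.mpr (by rintro p ⟨_, _, h1⟩ ⟨_, _, h2⟩; omega))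
      (Set.disjoint_left.mpr (by rintro p ⟨_, _, h1⟩ ⟨_, _, h2⟩; omega))
  have hgoalset : {p : ℤ × ℤ | ((p.1 : ℝ) ^ 2 / a ^ 2 + (p.2 : ℝ) ^ 2 / b ^ 2 ≤ R ^ 2) ∧
      1 ≤ p.1 ∧ 1 ≤ p.2} = {p : ℤ × ℤ | p ∈ S ∧ 1 ≤ p.1 ∧ 1 ≤ p.2} := rfl
  rw [hgoalset]
  omega

/-- The Dirichlet counting function of the rectangle `[0,a] × [0,b]` equals
`(ab/(4π)) E − ((a+b)/(2π)) √E + G(E)` up to an error bounded by `1`. -/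
theorem dirichletCount_rectangle_expansion (a b E : ℝ)
    (ha : 0 < a) (hb : 0 < b) (hE : 0 ≤ E) :
    |(dirichletCount a b E : ℝ) -
      ((a * b / (4 * Real.pi)) * E - ((a + b) / (2 * Real.pi)) * Real.sqrt E +
        areaError a b E)| ≤ 1 := by
  have hπ : (0 : ℝ) < Real.pi := Real.pi_pos
  set R : ℝ := Real.sqrt E / Real.pi with hRdef
  have hR0 : 0 ≤ R := div_nonneg (Real.sqrt_nonneg E) hπ.le
  have hsqrt : Real.sqrt E = Real.pi * R := by
    rw [hRdef]; field_simp
  have hE2 : E = R ^ 2 * Real.pi ^ 2 := by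
    rw [hRdef, div_pow, Real.sq_sqrt hE]
    field_simp
  have hN : dirichletCount a b E
      = {p : ℤ × ℤ | ((p.1 : ℝ) ^ 2 / a ^ 2 + (p.2 : ℝ) ^ 2 / b ^ 2 ≤ R ^ 2) ∧
          1 ≤ p.1 ∧ 1 ≤ p.2}.ncard := by
    rw [dirichletCount]
    congr 1
    ext p
    simp only [Set.mem_setOf_eq]
    have hEq : Real.pi ^ 2 * (p.1 : ℝ) ^ 2 / a ^ 2 + Real.pi ^ 2 * (p.2 : ℝ) ^ 2 / b ^ 2
        = ((p.1 : ℝ) ^ 2 / a ^ 2 + (p.2 : ℝ) ^ 2 / b ^ 2) * Real.pi ^ 2 := by ring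
    constructor
    · rintro ⟨h1, h2, h3⟩
      refine ⟨?_, h1, h2⟩
      rw [hEq, hE2] at h3
      exact le_of_mul_le_mul_right h3 (by positivity)
    · rintro ⟨h3, h1, h2⟩
      refine ⟨h1, h2, ?_⟩
      rw [hEq, hE2]
      exact mul_le_mul_of_nonneg_right h3 (by positivity)
  have hmain := count_partition a b R ha hb hR0
  rw [← hN, ← fullEllipseCount] at hmain
  have hcast : (fullEllipseCount a b R : ℝ)
      = 4 * (dirichletCount a b E : ℝ) + 2 * ((⌊a * R⌋).toNat : ℝ)
        + 2 * ((⌊b * R⌋).toNat : ℝ) + 1 := by exact_mod_cast hmain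
  have hA : ((⌊a * R⌋).toNat : ℝ) = ((⌊a * R⌋ : ℤ) : ℝ) := by
    exact_mod_cast Int.toNat_of_nonneg (Int.floor_nonneg.mpr (by positivity))
  have hB : ((⌊b * R⌋).toNat : ℝ) = ((⌊b * R⌋ : ℤ) : ℝ) := by
    exact_mod_cast Int.toNat_of_nonneg (Int.floor_nonneg.mpr (by positivity))
  rw [areaError, ← hRdef]
  have hexpr : (dirichletCount a b E : ℝ) -
      ((a * b / (4 * Real.pi)) * E - ((a + b) / (2 * Real.pi)) * Real.sqrt E +
        (1 / 4) * ((fullEllipseCount a b R : ℝ) - (a * b / Real.pi) * E))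
      = (a * R + b * R) / 2 - (((⌊a * R⌋ : ℤ) : ℝ) + ((⌊b * R⌋ : ℤ) : ℝ)) / 2 - 1 / 4 := by
    rw [hcast, hA, hB, hsqrt]
    field_simp
    ring
  rw [hexpr, abs_le]
  constructor <;>
    nlinarith [Int.floor_le (a * R), Int.lt_floor_add_one (a * R),
      Int.floor_le (b * R), Int.lt_floor_add_one (b * R)]
end

section
/- Let f : ℕ → ℝ satisfy f(k) ≥ c > 0 for all k, and let (b_k)_{k≥1} be positive, monotone decreasing, converging to 0, with S = Σ_{k=1}^∞ b_k < ∞. For E > 0 define n(E) = max{k : b_k ≥ π/√E}, the lower-bracket counting function N(E) = Σ_{k=1}^∞ #{(l,m) ∈ ℤ² : l ≥ 1, m ≥ 1, π²l²/f(k)² + π²m²/b_k² ≤ E}, the core volume V(E) = Σ_{k=1}^{n(E)} f(k)·b_k, the summed perimeter L(E) = Σ_{k=1}^{n(E)} 2·(f(k) + b_k), and the summed area error G(E) = Σ_{k=1}^{n(E)} (1/4)·(P_k(√E/π) − (f(k)·b_k/π)·E), where P_k(R) = #{(l,m) ∈ ℤ² : l²/f(k)² + m²/b_k² ≤ R²}.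 Then there is a constant C > 0 such that for all E ≥ 1, |N(E) − ((1/(4π))·V(E)·E − (1/(4π))·L(E)·√E + G(E))| ≤ C·√E. This is the main asymptotic law for simple domains, expressing the eigenvalue counting function through the geometry of the spectral cores with error O(√E). -/
/-!
Reflecting the lattice points of the ellipse `l²/a² + m²/b² ≤ R²` in both axes gives the
exact identity `P(R) = 4 N(π²R²) + 2⌊aR⌋ + 2⌊bR⌋ + 1` for the rectangle `[0,a] × [0,b]`.
With `R = √E/π` this says that the Dirichlet count of each rectangle differs from its Weyl
terms by `({aR} + {bR})/2 - 1/4`, which has absolute value at most `1`. Rectangles with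
`b_k < π/√E` carry no eigenvalue below `E`, and since `b` is decreasing with sum `S`, the
spectral core has at most `S√E/π` rectangles; summing the per-rectangle errors gives the
bound with `C = S/π`.
-/

open Real Filter

/-- The number of rectangles thick enough to support eigenvalues of size at
most `E` (sequences are `0`-indexed; for `b` antitone this is
`max{k : b_k ≥ π/√E}` in `1`-indexed notation). -/
noncomputable def coreIndex (b : ℕ → ℝ) (E : ℝ) : ℕ :=
  Set.ncard {k : ℕ | Real.pi / Real.sqrt E ≤ b k}

theorem Set.ncard_eq_two_mul_ncard_pos_add_ncard_zero {α G : Type*} [AddCommGroup G]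
    [LinearOrder G] [IsOrderedAddMonoid G] {s : Set α} (hs : s.Finite) {σ : α → α}
    (hσ : Function.Involutive σ) (hσs : Set.MapsTo σ s s) {g : α → G}
    (hg : ∀ x, g (σ x) = -g x) :
    s.ncard = 2 * {x ∈ s | 0 < g x}.ncard + {x ∈ s | g x = 0}.ncard := by
  set P := {x ∈ s | 0 < g x}
  have hcover : s = (P ∪ σ '' P) ∪ {x ∈ s | g x = 0} := by
    ext x
    refine ⟨fun hx => ?_, ?_⟩
    · rcases lt_trichotomy (g x) 0 with hneg | hzero | hpos
      · exact .inl (.inr ⟨σ x, ⟨hσs hx, by rw [hg]; exact neg_pos.2 hneg⟩, hσ x⟩)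
      · exact .inr ⟨hx, hzero⟩
      · exact .inl (.inl ⟨hx, hpos⟩)
    · rintro ((hx | ⟨y, hy, rfl⟩) | hx)
      exacts [hx.1, hσs hy.1, hx.1]
  have hdisj₁ : Disjoint P (σ '' P) := by
    rw [Set.disjoint_left]
    rintro _ hx ⟨y, hy, rfl⟩
    have := hx.2
    rw [hg] at this
    exact (neg_pos.1 this).not_gt hy.2
  have hdisj₂ : Disjoint (P ∪ σ '' P) {x ∈ s | g x = 0} := by
    rw [Set.disjoint_left]
    rintro _ (hx | ⟨y, hy, rfl⟩) hz
    · exact hx.2.ne' hz.2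
    · have := hz.2
      rw [hg, neg_eq_zero] at this
      exact hy.2.ne' this
  have hP : P.Finite := hs.subset fun x hx => hx.1
  rw [congrArg Set.ncard hcover,
    Set.ncard_union_eq hdisj₂ (hP.union (hP.image σ)) (hs.subset fun x hx => hx.1),
    Set.ncard_union_eq hdisj₁ hP (hP.image σ), Set.ncard_image_of_injective _ hσ.injective]
  ring

theorem Int.ncard_setOf_pos_le (x : ℝ) :
    {l : ℤ | 0 < l ∧ (l : ℝ) ≤ x}.ncard = ⌊x⌋₊ := by
  have : {l : ℤ | 0 < l ∧ (l : ℝ) ≤ x} = Set.Icc 1 ⌊x⌋ := by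
    ext l
    simp only [Set.mem_ofPred_eq, Set.mem_Icc, ← Int.le_floor]
    omega
  rw [this, ← Finset.coe_Icc, Set.ncard_coe_finset, Int.card_Icc, add_sub_cancel_right,
    Int.floor_toNat]

theorem sq_div_sq_le_sq_iff {a R x : ℝ} (ha : 0 < a) (hR : 0 ≤ R) :
    x ^ 2 / a ^ 2 ≤ R ^ 2 ↔ |x| ≤ a * R := by
  rw [div_le_iff₀ (by positivity), ← mul_pow, sq_le_sq, abs_of_nonneg (mul_nonneg hR ha.le),
    mul_comm]

theorem ncard_eq_of_neg_fst_mem_of_neg_snd_mem {S : Set (ℤ × ℤ)} (hS : S.Finite)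
    (h₁ : ∀ p ∈ S, (-p.1, p.2) ∈ S) (h₂ : ∀ p ∈ S, (p.1, -p.2) ∈ S) :
    S.ncard = 4 * {p ∈ S | 0 < p.1 ∧ 0 < p.2}.ncard +
      2 * {p ∈ S | 0 < p.1 ∧ p.2 = 0}.ncard + 2 * {p ∈ S | p.1 = 0 ∧ 0 < p.2}.ncard +
      {p ∈ S | p.1 = 0 ∧ p.2 = 0}.ncard := by
  have hsplit_snd (A : ℤ → Prop) :
      {p ∈ S | A p.1}.ncard =
        2 * {p ∈ S | A p.1 ∧ 0 < p.2}.ncard + {p ∈ S | A p.1 ∧ p.2 = 0}.ncard := by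
    have hsep (B : ℤ × ℤ → Prop) :
        {p ∈ {p ∈ S | A p.1} | B p} = {p ∈ S | A p.1 ∧ B p} :=
      Set.ext fun _ => and_assoc
    rw [← hsep, ← hsep]
    refine Set.ncard_eq_two_mul_ncard_pos_add_ncard_zero (hS.subset fun p hp => hp.1)
      (σ := fun p => (p.1, -p.2)) (fun p => by simp) ?_ (fun _ => rfl)
    exact fun p hp => ⟨h₂ p hp.1, hp.2⟩
  rw [Set.ncard_eq_two_mul_ncard_pos_add_ncard_zero hS (σ := fun p => (-p.1, p.2))
      (fun p => by simp) h₁ (g := Prod.fst) (fun _ => rfl),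
    hsplit_snd (0 < ·), hsplit_snd (· = 0)]
  ring

theorem IsLowerSet.eq_Iio_ncard {s : Set ℕ} (h : IsLowerSet s) (hs : s.Finite) :
    s = Set.Iio s.ncard := by
  obtain rfl | ⟨n, rfl⟩ := h.eq_univ_or_Iio
  · exact absurd hs Set.infinite_univ
  · rw [Set.ncard_Iio_nat]

def ellipseLattice (a b R : ℝ) : Set (ℤ × ℤ) :=
  {p | (p.1 : ℝ) ^ 2 / a ^ 2 + (p.2 : ℝ) ^ 2 / b ^ 2 ≤ R ^ 2}

theorem fullEllipseCount_eq_ncard (a b R : ℝ) :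
    fullEllipseCount a b R = (ellipseLattice a b R).ncard := rfl

theorem ncard_ellipseLattice_quadrant (a b R : ℝ) :
    {p ∈ ellipseLattice a b R | 0 < p.1 ∧ 0 < p.2}.ncard =
      dirichletCount a b (π ^ 2 * R ^ 2) := by
  have hscale (x y : ℝ) : π ^ 2 * x ^ 2 / a ^ 2 + π ^ 2 * y ^ 2 / b ^ 2 ≤ π ^ 2 * R ^ 2 ↔
      x ^ 2 / a ^ 2 + y ^ 2 / b ^ 2 ≤ R ^ 2 := by
    rw [mul_div_assoc, mul_div_assoc, ← mul_add, mul_le_mul_iff_right₀ (pow_pos pi_pos 2)]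
  rw [dirichletCount]
  congr 1
  ext p
  simp only [ellipseLattice, Set.mem_ofPred_eq, hscale, Order.one_le_iff_pos]
  tauto

theorem ncard_ellipseLattice_origin (a b R : ℝ) :
    {p ∈ ellipseLattice a b R | p.1 = 0 ∧ p.2 = 0}.ncard = 1 := by
  rw [Set.ncard_eq_one]
  refine ⟨(0, 0), Set.ext fun p => ⟨fun hp => Prod.ext hp.2.1 hp.2.2, ?_⟩⟩
  rintro rfl
  exact ⟨by simpa [ellipseLattice] using sq_nonneg R, rfl, rfl⟩

section Ellipse

variable {a b R : ℝ}

theorem abs_le_of_mem_ellipseLattice (ha : 0 < a) (hb : 0 < b) (hR : 0 ≤ R) {p : ℤ × ℤ}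
    (hp : p ∈ ellipseLattice a b R) : |(p.1 : ℝ)| ≤ a * R ∧ |(p.2 : ℝ)| ≤ b * R :=
  ⟨(sq_div_sq_le_sq_iff ha hR).1 (le_of_add_le_of_nonneg_left hp (by positivity)),
    (sq_div_sq_le_sq_iff hb hR).1 (le_of_add_le_of_nonneg_right hp (by positivity))⟩

theorem ellipseLattice_finite (ha : 0 < a) (hb : 0 < b) (hR : 0 ≤ R) :
    (ellipseLattice a b R).Finite := by
  refine (Set.finite_Icc (-(⌊a * R⌋, ⌊b * R⌋)) (⌊a * R⌋, ⌊b * R⌋)).subset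
    fun p hp => ?_
  obtain ⟨hp₁, hp₂⟩ := abs_le_of_mem_ellipseLattice ha hb hR hp
  have h₁ := abs_le.1 (Int.le_floor.2 (by rwa [Int.cast_abs]) : |p.1| ≤ ⌊a * R⌋)
  have h₂ := abs_le.1 (Int.le_floor.2 (by rwa [Int.cast_abs]) : |p.2| ≤ ⌊b * R⌋)
  exact ⟨⟨h₁.1, h₂.1⟩, ⟨h₁.2, h₂.2⟩⟩

theorem ncard_ellipseLattice_fst_axis (ha : 0 < a) (hb : 0 < b) (hR : 0 ≤ R) :
    {p ∈ ellipseLattice a b R | 0 < p.1 ∧ p.2 = 0}.ncard = ⌊a * R⌋₊ := by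
  have : {p ∈ ellipseLattice a b R | 0 < p.1 ∧ p.2 = 0} =
      (fun l : ℤ => (l, (0 : ℤ))) '' {l | 0 < l ∧ (l : ℝ) ≤ a * R} := by
    ext ⟨l, m⟩
    simp only [Set.mem_ofPred_eq, Set.mem_image, Prod.mk.injEq]
    constructor
    · rintro ⟨hp, hl, rfl⟩
      refine ⟨l, ⟨hl, ?_⟩, rfl, rfl⟩
      simpa [abs_of_pos (Int.cast_pos.2 hl)] using (abs_le_of_mem_ellipseLattice ha hb hR hp).1
    · rintro ⟨l, ⟨hl, hla⟩, rfl, rfl⟩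
      refine ⟨?_, hl, rfl⟩
      simpa [ellipseLattice, sq_div_sq_le_sq_iff ha hR, abs_of_pos (Int.cast_pos.2 hl)] using hla
  rw [this, Set.ncard_image_of_injective _ (Prod.mk_left_injective 0), Int.ncard_setOf_pos_le]

theorem ncard_ellipseLattice_snd_axis (ha : 0 < a) (hb : 0 < b) (hR : 0 ≤ R) :
    {p ∈ ellipseLattice a b R | p.1 = 0 ∧ 0 < p.2}.ncard = ⌊b * R⌋₊ := by
  have : {p ∈ ellipseLattice a b R | p.1 = 0 ∧ 0 < p.2} =
      (fun m : ℤ => ((0 : ℤ), m)) '' {m | 0 < m ∧ (m : ℝ) ≤ b * R} := by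
    ext ⟨l, m⟩
    simp only [Set.mem_ofPred_eq, Set.mem_image, Prod.mk.injEq]
    constructor
    · rintro ⟨hp, rfl, hm⟩
      refine ⟨m, ⟨hm, ?_⟩, rfl, rfl⟩
      simpa [abs_of_pos (Int.cast_pos.2 hm)] using (abs_le_of_mem_ellipseLattice ha hb hR hp).2
    · rintro ⟨m, ⟨hm, hmb⟩, rfl, rfl⟩
      refine ⟨?_, rfl, hm⟩
      simpa [ellipseLattice, sq_div_sq_le_sq_iff hb hR, abs_of_pos (Int.cast_pos.2 hm)] using hmb
  rw [this, Set.ncard_image_of_injective _ (Prod.mk_right_injective 0), Int.ncard_setOf_pos_le]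

theorem fullEllipseCount_eq (ha : 0 < a) (hb : 0 < b) (hR : 0 ≤ R) :
    fullEllipseCount a b R =
      4 * dirichletCount a b (π ^ 2 * R ^ 2) + 2 * ⌊a * R⌋₊ + 2 * ⌊b * R⌋₊ + 1 := by
  have hneg_fst : ∀ p ∈ ellipseLattice a b R, (-p.1, p.2) ∈ ellipseLattice a b R :=
    fun p hp => by simpa [ellipseLattice] using hp
  have hneg_snd : ∀ p ∈ ellipseLattice a b R, (p.1, -p.2) ∈ ellipseLattice a b R :=
    fun p hp => by simpa [ellipseLattice] using hp
  rw [fullEllipseCount_eq_ncard, ncard_eq_of_neg_fst_mem_of_neg_snd_mem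
      (ellipseLattice_finite ha hb hR) hneg_fst hneg_snd,
    ncard_ellipseLattice_quadrant, ncard_ellipseLattice_fst_axis ha hb hR,
    ncard_ellipseLattice_snd_axis ha hb hR, ncard_ellipseLattice_origin]

end Ellipse

theorem abs_dirichletCount_sub_le_one {a b E : ℝ} (ha : 0 < a) (hb : 0 < b) (hE : 0 ≤ E) :
    |(dirichletCount a b E : ℝ) -
      (1 / (4 * π) * (a * b) * E - 1 / (4 * π) * (2 * (a + b)) * √E +
        1 / 4 * ((fullEllipseCount a b (√E / π) : ℝ) - a * b / π * E))| ≤ 1 := by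
  set R := √E / π
  have hR : 0 ≤ R := by positivity
  have hsqrt : √E = π * R := (mul_div_cancel₀ (√E) pi_pos.ne').symm
  have hcount := fullEllipseCount_eq ha hb hR
  rw [show π ^ 2 * R ^ 2 = E by rw [← mul_pow, ← hsqrt, sq_sqrt hE]] at hcount
  have hdiff : (dirichletCount a b E : ℝ) -
      (1 / (4 * π) * (a * b) * E - 1 / (4 * π) * (2 * (a + b)) * √E +
        1 / 4 * ((fullEllipseCount a b R : ℝ) - a * b / π * E)) =
      (a * R - ⌊a * R⌋₊) / 2 + (b * R - ⌊b * R⌋₊) / 2 - 1 / 4 := by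
    rw [hcount, hsqrt]
    push_cast
    field_simp
    ring
  rw [hdiff, abs_le]
  constructor <;> linarith [Nat.floor_le (mul_nonneg ha.le hR), Nat.lt_floor_add_one (a * R),
    Nat.floor_le (mul_nonneg hb.le hR), Nat.lt_floor_add_one (b * R)]

theorem dirichletCount_eq_zero_of_lt {a b E : ℝ} (hb : 0 < b) (hE : 0 < E) (h : b < π / √E) :
    dirichletCount a b E = 0 := by
  have hbE : E * b ^ 2 < π ^ 2 := by
    have := pow_lt_pow_left₀ ((lt_div_iff₀ (sqrt_pos.2 hE)).1 h) (by positivity) two_ne_zero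
    rwa [mul_pow, sq_sqrt hE.le, mul_comm] at this
  rw [dirichletCount, ← Set.ncard_empty (ℤ × ℤ)]
  congr 1
  refine Set.eq_empty_of_forall_notMem ?_
  rintro ⟨l, m⟩ ⟨-, hm, hlm⟩
  have hm2 : (1 : ℝ) ≤ (m : ℝ) ^ 2 := one_le_pow₀ (by exact_mod_cast hm)
  have hm_term : π ^ 2 / b ^ 2 ≤ π ^ 2 * (m : ℝ) ^ 2 / b ^ 2 :=
    div_le_div_of_nonneg_right (le_mul_of_one_le_right (sq_nonneg π) hm2) (sq_nonneg b)
  have hE_lt : E < π ^ 2 / b ^ 2 := (lt_div_iff₀ (by positivity)).2 hbE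
  have hl_term : 0 ≤ π ^ 2 * (l : ℝ) ^ 2 / a ^ 2 := by positivity
  linarith

section Core

variable {b : ℕ → ℝ} {E : ℝ}

theorem setOf_le_eq_Iio_coreIndex (hmono : Antitone b) (hsum : Summable b) (hE : 0 < E) :
    {k | π / √E ≤ b k} = Set.Iio (coreIndex b E) := by
  have hfin : {k | π / √E ≤ b k}.Finite := by
    simpa using Filter.eventually_cofinite.1
      (hsum.tendsto_cofinite_zero.eventually (gt_mem_nhds (by positivity : 0 < π / √E)))
  exact IsLowerSet.eq_Iio_ncard (fun _ _ hji hi => hi.trans (hmono hji)) hfin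

theorem coreIndex_le (hb : ∀ k, 0 ≤ b k) (hmono : Antitone b) (hsum : Summable b)
    (hE : 0 < E) : (coreIndex b E : ℝ) ≤ (∑' k, b k) / π * √E := by
  have hcore := setOf_le_eq_Iio_coreIndex hmono hsum hE
  have hmass : coreIndex b E * (π / √E) ≤ ∑' k, b k :=
    calc coreIndex b E * (π / √E) = ∑ _ ∈ Finset.range (coreIndex b E), π / √E := by simp
      _ ≤ ∑ k ∈ Finset.range (coreIndex b E), b k := Finset.sum_le_sum fun k hk =>
          (Set.ext_iff.1 hcore k).2 (Finset.mem_range.1 hk)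
      _ ≤ ∑' k, b k := hsum.sum_le_tsum _ fun k _ => hb k
  rwa [← le_div_iff₀ (by positivity), div_div_eq_mul_div, mul_div_right_comm] at hmass

end Core

theorem simple_domain_weyl_law_general (f b : ℕ → ℝ) (c : ℝ) (hc : 0 < c)
    (hf : ∀ k, c ≤ f k) (hb : ∀ k, 0 < b k) (hmono : Antitone b)
    (hsum : Summable b) :
    ∃ C > (0 : ℝ), ∀ E : ℝ, 1 ≤ E →
      |(∑' k, (dirichletCount (f k) (b k) E : ℝ)) -
        ((1 / (4 * Real.pi)) *
            (∑ k ∈ Finset.range (coreIndex b E), f k * b k) * E -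
          (1 / (4 * Real.pi)) *
            (∑ k ∈ Finset.range (coreIndex b E), 2 * (f k + b k)) *
              Real.sqrt E +
          ∑ k ∈ Finset.range (coreIndex b E),
            (1 / 4) * ((fullEllipseCount (f k) (b k)
                (Real.sqrt E / Real.pi) : ℝ) -
              (f k * b k / Real.pi) * E))| ≤ C * Real.sqrt E := by
  refine ⟨(∑' k, b k) / π, div_pos (hsum.tsum_pos (fun k => (hb k).le) 0 (hb 0)) pi_pos,
    fun E hE => ?_⟩
  have hE₀ : 0 < E := by linarith
  have htail : ∀ k ∉ Finset.range (coreIndex b E), (dirichletCount (f k) (b k) E : ℝ) = 0 :=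
    fun k hk => by
      have hk' : k ∉ {k | π / √E ≤ b k} := by
        rwa [setOf_le_eq_Iio_coreIndex hmono hsum hE₀, Set.mem_Iio, ← Finset.mem_range]
      rw [dirichletCount_eq_zero_of_lt (hb k) hE₀ (not_le.1 hk'), Nat.cast_zero]
  rw [tsum_eq_sum htail, Finset.mul_sum, Finset.mul_sum, Finset.sum_mul, Finset.sum_mul,
    ← Finset.sum_sub_distrib, ← Finset.sum_add_distrib, ← Finset.sum_sub_distrib]
  calc _ ≤ ∑ _ ∈ Finset.range (coreIndex b E), (1 : ℝ) :=
        (Finset.abs_sum_le_sum_abs _ _).trans <| Finset.sum_le_sum fun k _ =>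
          abs_dirichletCount_sub_le_one (hc.trans_le (hf k)) (hb k) hE₀.le
    _ = coreIndex b E := by simp
    _ ≤ (∑' k, b k) / π * √E := coreIndex_le (fun k => (hb k).le) hmono hsum hE₀

/-- Main asymptotic law for simple domains (lower bracket): the summed
Dirichlet lattice count equals
`(1/(4π))·V(E)·E − (1/(4π))·L(E)·√E + G(E)` up to an error `O(√E)`,
where `V`, `L`, `G` are the core volume, summed perimeter and summed area
error of the spectral core. -/
theorem simple_domain_weyl_law (f b : ℕ → ℝ) (c : ℝ) (hc : 0 < c)
    (hf : ∀ k, c ≤ f k) (hb : ∀ k, 0 < b k) (hmono : Antitone b)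
    (hlim : Tendsto b atTop (nhds 0)) (hsum : Summable b) :
    ∃ C > (0 : ℝ), ∀ E : ℝ, 1 ≤ E →
      |(∑' k, (dirichletCount (f k) (b k) E : ℝ)) -
        ((1 / (4 * Real.pi)) *
            (∑ k ∈ Finset.range (coreIndex b E), f k * b k) * E -
          (1 / (4 * Real.pi)) *
            (∑ k ∈ Finset.range (coreIndex b E), 2 * (f k + b k)) *
              Real.sqrt E +
          ∑ k ∈ Finset.range (coreIndex b E),
            (1 / 4) * ((fullEllipseCount (f k) (b k)
                (Real.sqrt E / Real.pi) : ℝ) -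
              (f k * b k / Real.pi) * E))| ≤ C * Real.sqrt E :=
  simple_domain_weyl_law_general f b c hc hf hb hmono hsum
end

section
/- Let n ≥ 1, let (a_k)_{1≤k≤n+1} be a strictly increasing sequence of reals with a_1 = 0, and let (b_k)_{1≤k≤n} be a positive, monotone decreasing sequence. Let Q(n) be the interior of ⋃_{k=1}^{n} [a_k, a_{k+1}] × [0, b_k] ⊂ ℝ². Then the 1-dimensional Hausdorff measure of the topological frontier of Q(n) equals 2·a_{n+1} + 2·b_1. Consequently, if Σ_{k=1}^∞ b_k = S < ∞, then |vol₁(∂Q(n)) − Σ_{k=1}^{n} 2((a_{k+1}−a_k) + b_k)| ≤ 2S, i.e. the perimeter of the union differs from the sum of the rectangle perimeters by a bounded amount. -/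
/-!
The staircase `U = ⋃ₖ [a_k, a_{k+1}] × [0, b_k]` has interior
`W = ⋃ₖ (0, a_{k+1}) × (0, b_k)`: a point whose neighbourhood lies in `U` can be pushed
left, down, and diagonally up-right while staying in `U`. Conversely `U = closure W`,
so `∂Q(n) = U \ W`. Because `(b_k)` decreases, `U \ W` is the polygon formed by the
bottom edge `[0, a_{n+1}] × {0}`, the left edge `{0} × [0, b_1]`, the top edges
`[a_k, a_{k+1}] × {b_k}` and the risers `{a_{k+1}} × [b_{k+1}, b_k]` (with `b_{n+1}`
read as `0`). Distinct edges meet in at most countably many points, so `μH[1]` adds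
their lengths: the horizontal edges give `2 a_{n+1}` and the vertical ones telescope
to `2 b_1`.
-/

open Real MeasureTheory

/-- The closed rectangle `[a_k, a_{k+1}] × [0, b_k]` in the Euclidean plane. -/
def exampleRect (a b : ℕ → ℝ) (k : ℕ) : Set (EuclideanSpace ℝ (Fin 2)) :=
  {p | p 0 ∈ Set.Icc (a k) (a (k + 1)) ∧ p 1 ∈ Set.Icc 0 (b k)}

/-- The spectral core `Q(n)`: the interior of the union of the first `n`
rectangles `[a_k, a_{k+1}] × [0, b_k]`, `k = 1, …, n`. -/
def coreSet (a b : ℕ → ℝ) (n : ℕ) : Set (EuclideanSpace ℝ (Fin 2)) :=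
  interior (⋃ k ∈ Finset.Icc 1 n, exampleRect a b k)

section

open Set Filter Topology

lemma exists_pos_add_smul_mem {E : Type*} [NormedAddCommGroup E] [NormedSpace ℝ E] {s : Set E}
    {p : E} (hs : s ∈ 𝓝 p) (v : E) : ∃ δ > (0 : ℝ), p + δ • v ∈ s := by
  have h : Tendsto (fun δ : ℝ => p + δ • v) (𝓝[>] 0) (𝓝 p) :=
    (Continuous.tendsto' (by fun_prop) 0 p (by simp)).mono_left nhdsWithin_le_nhds
  obtain ⟨δ, hδs, hδ⟩ := ((h.eventually hs).and self_mem_nhdsWithin).exists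
  exact ⟨δ, hδ, hδs⟩

lemma exists_mem_Icc_of_mem_Icc {α : Type*} [LinearOrder α] (f : ℕ → α) {i m : ℕ} (him : i ≤ m)
    {x : α} (hx : x ∈ Icc (f i) (f (m + 1))) : ∃ j ∈ Finset.Icc i m, x ∈ Icc (f j) (f (j + 1)) := by
  induction m, him using Nat.le_induction with
  | base => exact ⟨i, by simp, hx⟩
  | succ m him ih =>
    rcases le_total x (f (m + 1)) with h | h
    · obtain ⟨j, hj, hxj⟩ := ih ⟨hx.1, h⟩
      exact ⟨j, Finset.Icc_subset_Icc_right m.le_succ hj, hxj⟩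
    · exact ⟨m + 1, by simp; omega, h, hx.2⟩

lemma Summable.sum_Icc_one_le_tsum {f : ℕ → ℝ} (hf : Summable fun k => f (k + 1))
    (hf0 : ∀ k, 1 ≤ k → 0 ≤ f k) (n : ℕ) : ∑ k ∈ Finset.Icc 1 n, f k ≤ ∑' k, f (k + 1) := by
  rw [show ∑ k ∈ Finset.Icc 1 n, f k = ∑ k ∈ Finset.range n, f (k + 1) by
    rw [Finset.range_eq_Ico, Finset.sum_Ico_add' f 0 n 1]; rfl]
  exact hf.sum_le_tsum _ fun k _ => hf0 (k + 1) (by omega)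

end

namespace Staircase

open Set Filter Topology

local notation "ℝ²" => EuclideanSpace ℝ (Fin 2)

noncomputable def planeCoords : ℝ² ≃ₜ ℝ × ℝ :=
  (PiLp.homeomorph 2 fun _ : Fin 2 => ℝ).trans (Homeomorph.finTwoArrow)

@[simp] lemma planeCoords_symm_apply_zero (q : ℝ × ℝ) : planeCoords.symm q 0 = q.1 := rfl

@[simp] lemma planeCoords_symm_apply_one (q : ℝ × ℝ) : planeCoords.symm q 1 = q.2 := rfl

def box (s t : Set ℝ) : Set ℝ² := {p | p 0 ∈ s ∧ p 1 ∈ t}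

lemma box_eq_preimage (s t : Set ℝ) : box s t = planeCoords ⁻¹' (s ×ˢ t) := rfl

lemma box_mono {s s' t t' : Set ℝ} (hs : s ⊆ s') (ht : t ⊆ t') : box s t ⊆ box s' t' :=
  fun _ hp => ⟨hs hp.1, ht hp.2⟩

lemma box_inter_box (s s' t t' : Set ℝ) : box s t ∩ box s' t' = box (s ∩ s') (t ∩ t') :=
  Set.ext fun _ => and_and_and_comm

lemma box_Icc_inter_box_Icc_subset {u v u' v' : ℝ} (h : v ≤ u') (t t' : Set ℝ) :
    box (Icc u v) t ∩ box (Icc u' v') t' ⊆ box {u'} (t ∩ t') := by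
  rw [box_inter_box]
  exact box_mono (fun x hx => le_antisymm (hx.1.2.trans h) hx.2.1) subset_rfl

lemma isOpen_box {s t : Set ℝ} (hs : IsOpen s) (ht : IsOpen t) : IsOpen (box s t) :=
  (hs.prod ht).preimage planeCoords.continuous

lemma isClosed_box {s t : Set ℝ} (hs : IsClosed s) (ht : IsClosed t) : IsClosed (box s t) :=
  (hs.prod ht).preimage planeCoords.continuous

lemma closure_box (s t : Set ℝ) : closure (box s t) = box (closure s) (closure t) := by
  rw [box_eq_preimage, ← planeCoords.preimage_closure, closure_prod_eq, box_eq_preimage]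

lemma countable_box {s t : Set ℝ} (hs : s.Countable) (ht : t.Countable) :
    (box s t).Countable :=
  (hs.prod ht).preimage planeCoords.injective

lemma isometry_planeCoords_symm_mk_left (c : ℝ) : Isometry fun x : ℝ => planeCoords.symm (x, c) :=
  Isometry.of_dist_eq fun x y => by
    simp [EuclideanSpace.dist_eq, Real.dist_eq, Real.sqrt_sq_eq_abs]

lemma isometry_planeCoords_symm_mk_right (c : ℝ) : Isometry fun y : ℝ => planeCoords.symm (c, y) :=
  Isometry.of_dist_eq fun x y => by
    simp [EuclideanSpace.dist_eq, Real.dist_eq, Real.sqrt_sq_eq_abs]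

instance : NullSingletonClass (μH[1] : Measure ℝ²) :=
  Measure.nullSingletonClass_hausdorff ℝ² one_pos

lemma hausdorffMeasure_box_Icc_singleton (u v c : ℝ) :
    μH[1] (box (Icc u v) {c}) = ENNReal.ofReal (v - u) := by
  rw [box_eq_preimage, ← planeCoords.image_symm, prod_singleton, image_image,
    (isometry_planeCoords_symm_mk_left c).hausdorffMeasure_image (Or.inl zero_le_one),
    hausdorffMeasure_real, Real.volume_Icc]

lemma hausdorffMeasure_box_singleton_Icc (c u v : ℝ) :
    μH[1] (box {c} (Icc u v)) = ENNReal.ofReal (v - u) := by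
  rw [box_eq_preimage, ← planeCoords.image_symm, singleton_prod, image_image,
    (isometry_planeCoords_symm_mk_right c).hausdorffMeasure_image (Or.inl zero_le_one),
    hausdorffMeasure_real, Real.volume_Icc]

def staircase (a b : ℕ → ℝ) (n : ℕ) : Set ℝ² := ⋃ k ∈ Finset.Icc 1 n, exampleRect a b k

def openStaircase (a b : ℕ → ℝ) (n : ℕ) : Set ℝ² :=
  ⋃ k ∈ Finset.Icc 1 n, box (Ioo 0 (a (k + 1))) (Ioo 0 (b k))

/-- The height of the staircase over `[a_k, a_{k+1}]`, zero past the last step. -/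
def stepHeight (b : ℕ → ℝ) (n k : ℕ) : ℝ := if k ≤ n then b k else 0

def horizontalEdges (a b : ℕ → ℝ) (n : ℕ) : Set ℝ² :=
  box (Icc 0 (a (n + 1))) {0} ∪ ⋃ k ∈ Finset.Icc 1 n, box (Icc (a k) (a (k + 1))) {b k}

def verticalEdges (a b : ℕ → ℝ) (n : ℕ) : Set ℝ² :=
  box {0} (Icc 0 (b 1)) ∪
    ⋃ k ∈ Finset.Icc 1 n, box {a (k + 1)} (Icc (stepHeight b n (k + 1)) (b k))

variable {a b : ℕ → ℝ} {n : ℕ}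

lemma nonneg_of_monotoneOn (ha1 : a 1 = 0) (ha : MonotoneOn a (Icc 1 (n + 1))) {k : ℕ}
    (hk : 1 ≤ k) (hkn : k ≤ n + 1) : 0 ≤ a k :=
  ha1 ▸ ha ⟨le_rfl, by omega⟩ ⟨hk, hkn⟩ hk

lemma stepHeight_of_le {k : ℕ} (hk : k ≤ n) : stepHeight b n k = b k := if_pos hk

lemma stepHeight_nonneg (hb : ∀ k, 1 ≤ k → 0 < b k) {k : ℕ} (hk : 1 ≤ k) :
    0 ≤ stepHeight b n k := by
  unfold stepHeight
  split_ifs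
  exacts [(hb k hk).le, le_rfl]

lemma sum_sub_stepHeight (hn : 1 ≤ n) :
    ∑ k ∈ Finset.Icc 1 n, (b k - stepHeight b n (k + 1)) = b 1 := by
  have h := Finset.sum_Icc_sub hn fun k => -stepHeight b n k
  rw [stepHeight_of_le hn, stepHeight, if_neg (by omega)] at h
  rw [← Finset.sum_congr rfl fun k hk => ?_, h]
  · ring
  · rw [stepHeight_of_le (Finset.mem_Icc.1 hk).2]
    ring

lemma mem_staircase {p : ℝ²} :
    p ∈ staircase a b n ↔ ∃ k ∈ Finset.Icc 1 n, p ∈ box (Icc (a k) (a (k + 1))) (Icc 0 (b k)) := by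
  simp only [staircase, mem_iUnion, exists_prop]; rfl

lemma mem_openStaircase {p : ℝ²} :
    p ∈ openStaircase a b n ↔ ∃ k ∈ Finset.Icc 1 n, p ∈ box (Ioo 0 (a (k + 1))) (Ioo 0 (b k)) := by
  simp only [openStaircase, mem_iUnion, exists_prop]

lemma isClosed_staircase : IsClosed (staircase a b n) :=
  (Finset.finite_toSet _).isClosed_biUnion fun _ _ => isClosed_box isClosed_Icc isClosed_Icc

lemma isOpen_openStaircase : IsOpen (openStaircase a b n) :=
  isOpen_biUnion fun _ _ => isOpen_box isOpen_Ioo isOpen_Ioo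

lemma isClosed_verticalEdges : IsClosed (verticalEdges a b n) :=
  (isClosed_box isClosed_singleton isClosed_Icc).union <|
    (Finset.finite_toSet _).isClosed_biUnion fun _ _ => isClosed_box isClosed_singleton isClosed_Icc

lemma openStaircase_subset_staircase (ha1 : a 1 = 0) (hb' : AntitoneOn b (Ici 1)) :
    openStaircase a b n ⊆ staircase a b n := by
  intro p hp
  obtain ⟨k, hk, ⟨hx0, hxk⟩, hy0, hyk⟩ := mem_openStaircase.1 hp
  rw [Finset.mem_Icc] at hk
  obtain ⟨j, hj, hxj⟩ :=
    exists_mem_Icc_of_mem_Icc a hk.1 (x := p 0) ⟨ha1 ▸ hx0.le, hxk.le⟩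
  rw [Finset.mem_Icc] at hj
  have hbkj : b k ≤ b j := hb' (mem_Ici.2 hj.1) (mem_Ici.2 hk.1) hj.2
  exact mem_staircase.2
    ⟨j, Finset.mem_Icc.2 ⟨hj.1, hj.2.trans hk.2⟩, hxj, hy0.le, hyk.le.trans hbkj⟩

lemma interior_staircase_subset (ha1 : a 1 = 0) (ha : MonotoneOn a (Icc 1 (n + 1))) :
    interior (staircase a b n) ⊆ openStaircase a b n := by
  intro p hp
  have hU := mem_interior_iff_mem_nhds.1 hp
  obtain ⟨δ₁, hδ₁, h₁⟩ := exists_pos_add_smul_mem hU !₂[-1, 0]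
  obtain ⟨δ₂, hδ₂, h₂⟩ := exists_pos_add_smul_mem hU !₂[0, -1]
  obtain ⟨δ₃, hδ₃, h₃⟩ := exists_pos_add_smul_mem hU !₂[1, 1]
  obtain ⟨k, hk, ⟨hxk, -⟩, -⟩ := mem_staircase.1 h₁
  obtain ⟨_, _, -, hy0, -⟩ := mem_staircase.1 h₂
  obtain ⟨j, hj, ⟨-, hxj⟩, -, hyj⟩ := mem_staircase.1 h₃
  rw [Finset.mem_Icc] at hk
  have ha0 : 0 ≤ a k := nonneg_of_monotoneOn ha1 ha hk.1 (by omega)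
  simp only [PiLp.add_apply, PiLp.smul_apply, smul_eq_mul, Matrix.cons_val_zero,
    Matrix.cons_val_one, Matrix.cons_val_fin_one, mul_neg, mul_one] at hxk hy0 hxj hyj
  exact mem_openStaircase.2 ⟨j, hj, ⟨by linarith, by linarith⟩, by linarith, by linarith⟩

lemma staircase_subset_closure_openStaircase (ha1 : a 1 = 0) (ha : StrictMonoOn a (Icc 1 (n + 1)))
    (hb : ∀ k, 1 ≤ k → 0 < b k) : staircase a b n ⊆ closure (openStaircase a b n) := by
  intro p hp
  obtain ⟨k, hk, ⟨hxk, hxk'⟩, hy⟩ := mem_staircase.1 hp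
  have hk' := Finset.mem_Icc.1 hk
  have ha0 : 0 ≤ a k := nonneg_of_monotoneOn ha1 ha.monotoneOn hk'.1 (by omega)
  have hak : 0 < a (k + 1) := ha1 ▸ ha ⟨le_rfl, by omega⟩ ⟨by omega, by omega⟩ (by omega)
  have hbox : p ∈ closure (box (Ioo 0 (a (k + 1))) (Ioo 0 (b k))) := by
    rw [closure_box, closure_Ioo hak.ne, closure_Ioo (hb k hk'.1).ne]
    exact ⟨⟨ha0.trans hxk, hxk'⟩, hy⟩
  exact closure_mono (subset_biUnion_of_mem (u := fun k => box (Ioo 0 (a (k + 1))) (Ioo 0 (b k)))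
    (Finset.mem_coe.2 hk)) hbox

lemma frontier_coreSet (ha1 : a 1 = 0) (ha : StrictMonoOn a (Icc 1 (n + 1)))
    (hb : ∀ k, 1 ≤ k → 0 < b k) (hb' : AntitoneOn b (Ici 1)) :
    frontier (coreSet a b n) = staircase a b n \ openStaircase a b n := by
  have hW : openStaircase a b n ⊆ staircase a b n := openStaircase_subset_staircase ha1 hb'
  have hint : interior (staircase a b n) = openStaircase a b n :=
    (interior_staircase_subset ha1 ha.monotoneOn).antisymm
      (interior_maximal hW isOpen_openStaircase)
  have hcl : closure (openStaircase a b n) = staircase a b n :=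
    (closure_minimal hW isClosed_staircase).antisymm
      (staircase_subset_closure_openStaircase ha1 ha hb)
  change frontier (interior (staircase a b n)) = _
  rw [frontier, interior_interior, hint, hcl]

lemma staircase_diff_subset_edges (ha1 : a 1 = 0) (ha : StrictMonoOn a (Icc 1 (n + 1)))
    (hb' : AntitoneOn b (Ici 1)) :
    staircase a b n \ openStaircase a b n ⊆ horizontalEdges a b n ∪ verticalEdges a b n := by
  rintro p ⟨hpU, hpW⟩
  obtain ⟨k, hk, ⟨hxk, hxk'⟩, hy0, hyk⟩ := mem_staircase.1 hpU
  have hk' := Finset.mem_Icc.1 hk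
  have hW : ∀ j ∈ Finset.Icc 1 n, 0 < p 0 → p 0 < a (j + 1) → 0 < p 1 → b j ≤ p 1 :=
    fun j hj hx hx' hy => not_lt.1 fun hy' => hpW (mem_openStaircase.2 ⟨j, hj, ⟨hx, hx'⟩, hy, hy'⟩)
  have ha0 : 0 ≤ a k := nonneg_of_monotoneOn ha1 ha.monotoneOn hk'.1 (by omega)
  rcases hy0.eq_or_lt with hy0 | hy0
  · refine Or.inl (Or.inl ⟨⟨ha0.trans hxk, hxk'.trans ?_⟩, hy0.symm⟩)
    exact ha.monotoneOn ⟨by omega, by omega⟩ ⟨by omega, le_rfl⟩ (by omega)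
  rcases (ha0.trans hxk).eq_or_lt with hx0 | hx0
  · have hbk : b k ≤ b 1 := hb' (mem_Ici.2 le_rfl) (mem_Ici.2 hk'.1) hk'.1
    exact Or.inr (Or.inl ⟨hx0.symm, hy0.le, hyk.trans hbk⟩)
  rcases hxk'.lt_or_eq with hxk' | hxk'
  · have hyk' : p 1 = b k := le_antisymm hyk (hW k hk hx0 hxk' hy0)
    exact Or.inl (Or.inr (mem_biUnion (x := k) hk ⟨⟨hxk, hxk'.le⟩, hyk'⟩))
  refine Or.inr (Or.inr (mem_biUnion (x := k) hk ⟨hxk', ?_, hyk⟩))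
  unfold stepHeight
  split_ifs with hkn
  · refine hW (k + 1) (Finset.mem_Icc.2 ⟨by omega, hkn⟩) hx0 ?_ hy0
    exact hxk' ▸ ha ⟨by omega, by omega⟩ ⟨by omega, by omega⟩ (by omega)
  · exact hy0.le

lemma horizontalEdges_subset (hn : 1 ≤ n) (ha1 : a 1 = 0) (ha : MonotoneOn a (Icc 1 (n + 1)))
    (hb : ∀ k, 1 ≤ k → 0 < b k) (hb' : AntitoneOn b (Ici 1)) :
    horizontalEdges a b n ⊆ staircase a b n \ openStaircase a b n := by
  rintro p (⟨hx, hy⟩ | hp)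
  · obtain ⟨j, hj, hxj⟩ := exists_mem_Icc_of_mem_Icc a hn (x := p 0) (ha1 ▸ hx)
    refine ⟨mem_staircase.2 ⟨j, hj, hxj, ?_⟩, fun hpW => ?_⟩
    · rw [mem_singleton_iff.1 hy]
      exact ⟨le_rfl, (hb j (Finset.mem_Icc.1 hj).1).le⟩
    · obtain ⟨_, _, -, hy0, -⟩ := mem_openStaircase.1 hpW
      exact hy0.ne' hy
  obtain ⟨k, hk, ⟨hxk, hxk'⟩, hy⟩ := mem_iUnion₂.1 hp
  have hk' := Finset.mem_Icc.1 hk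
  refine ⟨mem_staircase.2 ⟨k, hk, ⟨hxk, hxk'⟩, ?_⟩, fun hpW => ?_⟩
  · rw [mem_singleton_iff.1 hy]
    exact ⟨(hb k hk'.1).le, le_rfl⟩
  obtain ⟨j, hj, ⟨-, hxj⟩, -, hyj⟩ := mem_openStaircase.1 hpW
  have hj' := Finset.mem_Icc.1 hj
  rcases lt_or_ge j k with hjk | hkj
  · have := ha ⟨by omega, by omega⟩ ⟨hk'.1, by omega⟩ (show j + 1 ≤ k by omega)
    linarith
  · have := hb' (mem_Ici.2 hk'.1) (mem_Ici.2 hj'.1) hkj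
    rw [mem_singleton_iff.1 hy] at hyj
    linarith

lemma verticalEdges_subset (hn : 1 ≤ n) (ha1 : a 1 = 0) (ha : MonotoneOn a (Icc 1 (n + 1)))
    (hb : ∀ k, 1 ≤ k → 0 < b k) (hb' : AntitoneOn b (Ici 1)) :
    verticalEdges a b n ⊆ staircase a b n \ openStaircase a b n := by
  rintro p (⟨hx, hy⟩ | hp)
  · refine ⟨mem_staircase.2 ⟨1, Finset.mem_Icc.2 ⟨le_rfl, hn⟩, ?_, hy⟩, fun hpW => ?_⟩
    · rw [mem_singleton_iff.1 hx, ← ha1]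
      exact ⟨le_rfl, ha ⟨le_rfl, by omega⟩ ⟨by omega, by omega⟩ (by omega)⟩
    · obtain ⟨_, _, ⟨hx0, -⟩, -⟩ := mem_openStaircase.1 hpW
      exact hx0.ne' hx
  obtain ⟨k, hk, hx, hyk, hyk'⟩ := mem_iUnion₂.1 hp
  have hk' := Finset.mem_Icc.1 hk
  rw [mem_singleton_iff] at hx
  refine ⟨mem_staircase.2 ⟨k, hk, ⟨?_, hx.le⟩, (stepHeight_nonneg hb (by omega)).trans hyk, hyk'⟩,
    fun hpW => ?_⟩
  · rw [hx]
    exact ha ⟨hk'.1, by omega⟩ ⟨by omega, by omega⟩ (by omega)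
  obtain ⟨j, hj, ⟨-, hxj⟩, -, hyj⟩ := mem_openStaircase.1 hpW
  have hj' := Finset.mem_Icc.1 hj
  rcases le_or_gt j k with hjk | hkj
  · have := ha ⟨by omega, by omega⟩ ⟨by omega, by omega⟩ (show j + 1 ≤ k + 1 by omega)
    linarith
  · rw [stepHeight_of_le (by omega)] at hyk
    have := hb' (mem_Ici.2 (by omega)) (mem_Ici.2 hj'.1) (show k + 1 ≤ j by omega)
    linarith

lemma staircase_diff_openStaircase (hn : 1 ≤ n) (ha1 : a 1 = 0)
    (ha : StrictMonoOn a (Icc 1 (n + 1))) (hb : ∀ k, 1 ≤ k → 0 < b k)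
    (hb' : AntitoneOn b (Ici 1)) :
    staircase a b n \ openStaircase a b n = horizontalEdges a b n ∪ verticalEdges a b n :=
  (staircase_diff_subset_edges ha1 ha hb').antisymm <| union_subset
    (horizontalEdges_subset hn ha1 ha.monotoneOn hb hb')
    (verticalEdges_subset hn ha1 ha.monotoneOn hb hb')

lemma hausdorffMeasure_horizontalEdges (hn : 1 ≤ n) (ha1 : a 1 = 0)
    (ha : MonotoneOn a (Icc 1 (n + 1))) (hb : ∀ k, 1 ≤ k → 0 < b k) :
    μH[1] (horizontalEdges a b n) = ENNReal.ofReal (2 * a (n + 1)) := by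
  have hdisj : Disjoint (box (Icc 0 (a (n + 1))) {0})
      (⋃ k ∈ Finset.Icc 1 n, box (Icc (a k) (a (k + 1))) {b k}) := by
    refine disjoint_left.2 fun p ⟨_, hp0⟩ hp => ?_
    obtain ⟨k, hk, -, hpk⟩ := mem_iUnion₂.1 hp
    exact (hb k (Finset.mem_Icc.1 hk).1).ne' (hpk.symm.trans hp0)
  have htops : ∀ j ∈ Finset.Icc 1 n, ∀ k ∈ Finset.Icc 1 n, j < k →
      AEDisjoint μH[1] (box (Icc (a j) (a (j + 1))) {b j}) (box (Icc (a k) (a (k + 1))) {b k}) := by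
    intro j hj k hk hjk
    rw [Finset.mem_Icc] at hj hk
    refine measure_mono_null (box_Icc_inter_box_Icc_subset ?_ _ _) (Countable.measure_zero ?_ _)
    · exact ha ⟨by omega, by omega⟩ ⟨by omega, by omega⟩ (show j + 1 ≤ k by omega)
    · exact countable_box (countable_singleton _) ((countable_singleton _).mono inter_subset_left)
  rw [horizontalEdges, measure_union hdisj (Finset.measurableSet_biUnion _ fun _ _ =>
      (isClosed_box isClosed_Icc isClosed_singleton).measurableSet),
    measure_biUnion_finset₀ (fun j hj k hk hjk => hjk.lt_or_gt.elim (htops j hj k hk)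
        fun h => (htops k hk j hj h).symm)
      fun _ _ => (isClosed_box isClosed_Icc isClosed_singleton).measurableSet.nullMeasurableSet]
  have hstep : ∀ k ∈ Finset.Icc 1 n, a k ≤ a (k + 1) := fun k hk => by
    rw [Finset.mem_Icc] at hk
    exact ha ⟨hk.1, by omega⟩ ⟨by omega, by omega⟩ k.le_succ
  have hlast : 0 ≤ a (n + 1) := nonneg_of_monotoneOn ha1 ha (by omega) le_rfl
  simp only [hausdorffMeasure_box_Icc_singleton]
  rw [← ENNReal.ofReal_sum_of_nonneg fun k hk => sub_nonneg.2 (hstep k hk), Finset.sum_Icc_sub hn,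
    ha1, sub_zero, ← ENNReal.ofReal_add hlast hlast, two_mul]

lemma hausdorffMeasure_verticalEdges (hn : 1 ≤ n) (ha1 : a 1 = 0)
    (ha : StrictMonoOn a (Icc 1 (n + 1))) (hb : ∀ k, 1 ≤ k → 0 < b k)
    (hb' : AntitoneOn b (Ici 1)) :
    μH[1] (verticalEdges a b n) = ENNReal.ofReal (2 * b 1) := by
  have hdisj : Disjoint (box {0} (Icc 0 (b 1)))
      (⋃ k ∈ Finset.Icc 1 n, box {a (k + 1)} (Icc (stepHeight b n (k + 1)) (b k))) := by
    refine disjoint_left.2 fun p ⟨hp0, _⟩ hp => ?_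
    obtain ⟨k, hk, hpk, -⟩ := mem_iUnion₂.1 hp
    rw [Finset.mem_Icc] at hk
    have : a 1 < a (k + 1) := ha ⟨le_rfl, by omega⟩ ⟨by omega, by omega⟩ (by omega)
    exact this.ne (ha1.trans (hp0.symm.trans hpk))
  have hrisers : ((Finset.Icc 1 n : Finset ℕ) : Set ℕ).Pairwise fun j k =>
      Disjoint (box {a (j + 1)} (Icc (stepHeight b n (j + 1)) (b j)))
        (box {a (k + 1)} (Icc (stepHeight b n (k + 1)) (b k))) := by
    intro j hj k hk hjk
    rw [Finset.coe_Icc, mem_Icc] at hj hk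
    refine disjoint_left.2 fun p ⟨hpj, _⟩ ⟨hpk, _⟩ => hjk ?_
    exact Nat.succ_injective (ha.injOn ⟨by omega, by omega⟩ ⟨by omega, by omega⟩
      ((mem_singleton_iff.1 hpj).symm.trans hpk))
  have hlen : ∀ k ∈ Finset.Icc 1 n, 0 ≤ b k - stepHeight b n (k + 1) := fun k hk => by
    rw [Finset.mem_Icc] at hk
    unfold stepHeight
    split_ifs
    · exact sub_nonneg.2 (hb' (mem_Ici.2 hk.1) (mem_Ici.2 (by omega)) k.le_succ)
    · simpa using (hb k hk.1).le
  rw [verticalEdges, measure_union hdisj (Finset.measurableSet_biUnion _ fun _ _ =>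
      (isClosed_box isClosed_singleton isClosed_Icc).measurableSet),
    measure_biUnion_finset hrisers fun _ _ =>
      (isClosed_box isClosed_singleton isClosed_Icc).measurableSet]
  simp only [hausdorffMeasure_box_singleton_Icc]
  rw [← ENNReal.ofReal_sum_of_nonneg hlen, sum_sub_stepHeight hn, sub_zero,
    ← ENNReal.ofReal_add (hb 1 le_rfl).le (hb 1 le_rfl).le, two_mul]

lemma countable_horizontalEdges_inter_verticalEdges (ha1 : a 1 = 0) :
    (horizontalEdges a b n ∩ verticalEdges a b n).Countable := by
  refine (countable_box (countable_range a) ((countable_range b).insert 0)).mono ?_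
  rintro p ⟨hH, hV⟩
  constructor
  · rcases hV with ⟨hx, -⟩ | hV
    · exact ⟨1, ha1.trans hx.symm⟩
    · obtain ⟨k, -, hx, -⟩ := mem_iUnion₂.1 hV
      exact ⟨k + 1, hx.symm⟩
  · rcases hH with ⟨-, hy⟩ | hH
    · exact Or.inl hy
    · obtain ⟨k, -, -, hy⟩ := mem_iUnion₂.1 hH
      exact Or.inr ⟨k, hy.symm⟩

lemma hausdorffMeasure_frontier_coreSet (hn : 1 ≤ n) (ha1 : a 1 = 0)
    (ha : StrictMonoOn a (Icc 1 (n + 1))) (hb : ∀ k, 1 ≤ k → 0 < b k)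
    (hb' : AntitoneOn b (Ici 1)) :
    μH[1] (frontier (coreSet a b n)) = ENNReal.ofReal (2 * a (n + 1) + 2 * b 1) := by
  have hlast : 0 ≤ a (n + 1) := nonneg_of_monotoneOn ha1 ha.monotoneOn (by omega) le_rfl
  rw [frontier_coreSet ha1 ha hb hb', staircase_diff_openStaircase hn ha1 ha hb hb',
    measure_union₀ isClosed_verticalEdges.measurableSet.nullMeasurableSet
      ((countable_horizontalEdges_inter_verticalEdges ha1).measure_zero _),
    hausdorffMeasure_horizontalEdges hn ha1 ha.monotoneOn hb,
    hausdorffMeasure_verticalEdges hn ha1 ha hb hb',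
    ← ENNReal.ofReal_add (by positivity) (by linarith [hb 1 le_rfl])]

end Staircase

open Staircase in
/-- For `n ≥ 1`, `(a_k)_{1 ≤ k ≤ n+1}` strictly increasing with `a_1 = 0` and
`(b_k)_{k ≥ 1}` positive monotone decreasing, the `1`-dimensional Hausdorff
measure of the frontier of `Q(n)` equals `2·a_{n+1} + 2·b_1`; consequently, if
`Σ_{k≥1} b_k = S < ∞`, the perimeter of `Q(n)` differs from the sum
`Σ_{k=1}^n 2((a_{k+1} − a_k) + b_k)` of the rectangle perimeters by at most
`2S`. -/
theorem perimeter_of_core (n : ℕ) (hn : 1 ≤ n) (a b : ℕ → ℝ)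
    (ha1 : a 1 = 0) (hainc : ∀ k, 1 ≤ k → k ≤ n → a k < a (k + 1))
    (hb : ∀ k, 1 ≤ k → 0 < b k)
    (hmono : ∀ k, 1 ≤ k → b (k + 1) ≤ b k) :
    μH[1] (frontier (coreSet a b n)) =
      ENNReal.ofReal (2 * a (n + 1) + 2 * b 1) ∧
    (Summable (fun k : ℕ => b (k + 1)) →
      |(μH[1] (frontier (coreSet a b n))).toReal -
          ∑ k ∈ Finset.Icc 1 n, 2 * ((a (k + 1) - a k) + b k)| ≤
        2 * ∑' k : ℕ, b (k + 1)) := by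
  have ha : StrictMonoOn a (Set.Icc 1 (n + 1)) :=
    strictMonoOn_of_lt_add_one Set.ordConnected_Icc fun k _ hk hk' =>
      hainc k hk.1 (Nat.le_of_succ_le_succ hk'.2)
  have hb' : AntitoneOn b (Set.Ici 1) :=
    antitoneOn_of_add_one_le Set.ordConnected_Ici fun k _ hk _ => hmono k hk
  have hperim := hausdorffMeasure_frontier_coreSet hn ha1 ha hb hb'
  have hlast : 0 ≤ a (n + 1) := nonneg_of_monotoneOn ha1 ha.monotoneOn (by omega) le_rfl
  refine ⟨hperim, fun hsum => ?_⟩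
  have hb1 : b 1 ≤ ∑ k ∈ Finset.Icc 1 n, b k :=
    Finset.single_le_sum (fun k hk => (hb k (Finset.mem_Icc.1 hk).1).le)
      (Finset.mem_Icc.2 ⟨le_rfl, hn⟩)
  have hS := hsum.sum_Icc_one_le_tsum (fun k hk => (hb k hk).le) n
  rw [hperim, ENNReal.toReal_ofReal (by linarith [hb 1 le_rfl]), ← Finset.mul_sum,
    Finset.sum_add_distrib, Finset.sum_Icc_sub hn, ha1, abs_le]
  constructor <;> linarith [hb 1 le_rfl]
end

section
/- Let f : ℕ → ℝ satisfy f(k) ≥ c > 0 for all k and let (b_k)_{k≥1} be positive with b_k → 0. Then for every E > 0 the series Σ_{k=1}^∞ #{(l,m) ∈ ℤ² : l ≥ 0, m ≥ 1, π²l²/f(k)² + π²m²/b_k² ≤ E} has only finitely many nonzero terms: for every k with b_k < π/√E the k-th summand is zero, so the sum equals the finite sum over k ≤ n(E) where n(E) = max{k : b_k ≥ π/√E}. The same holds for the pure Dirichlet counts (l ≥ 1). In particular, both Dirichlet–Neumann bracketing bounds for the counting function of a simple domain are finite for every E, so the Dirichlet spectrum of a simple domain is purely discrete. -/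
open Real Filter

/-- The mixed Dirichlet–Neumann counting function: integer pairs `(l, m)` with
`l ≥ 0`, `m ≥ 1` and `π²l²/a² + π²m²/b² ≤ E`. -/
noncomputable def mixedCount (a b E : ℝ) : ℕ :=
  Set.ncard {p : ℤ × ℤ | 0 ≤ p.1 ∧ 1 ≤ p.2 ∧
    Real.pi ^ 2 * (p.1 : ℝ) ^ 2 / a ^ 2 + Real.pi ^ 2 * (p.2 : ℝ) ^ 2 / b ^ 2 ≤ E}

/-!
Every eigenvalue `π²l²/a² + π²m²/b²` (`m ≥ 1`) of a rectangle of height `b` is at least `π²/b²`,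
which exceeds `E` as soon as `b < π/√E`. Since `b_k → 0`, only finitely many `k` violate this bound,
and both bracketing series reduce to finite sums.
-/

lemma lt_div_sq_of_lt_div_sqrt {x y E : ℝ} (hx : 0 < x) (h : x < y / √E) : E < (y / x) ^ 2 := by
  have hsE : 0 < √E := by
    by_contra! h0
    rw [le_antisymm h0 (Real.sqrt_nonneg E), div_zero] at h
    linarith
  rw [lt_div_iff₀ hsE] at h
  have hy : 0 < y / x := div_pos ((mul_pos hx hsE).trans h) hx
  rwa [← Real.sqrt_lt' hy, lt_div_iff₀' hx]

lemma lt_rectEigenvalue_of_lt_pi_div_sqrt {a b E : ℝ} (hb : 0 < b) (h : b < π / √E)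
    (l : ℤ) {m : ℤ} (hm : 1 ≤ m) :
    E < π ^ 2 * (l : ℝ) ^ 2 / a ^ 2 + π ^ 2 * (m : ℝ) ^ 2 / b ^ 2 := by
  have hm2 : (1 : ℝ) ≤ (m : ℝ) ^ 2 := one_le_pow₀ (by exact_mod_cast hm)
  calc E < (π / b) ^ 2 := lt_div_sq_of_lt_div_sqrt hb h
    _ = π ^ 2 * 1 / b ^ 2 := by ring
    _ ≤ π ^ 2 * (m : ℝ) ^ 2 / b ^ 2 := by gcongr
    _ ≤ π ^ 2 * (l : ℝ) ^ 2 / a ^ 2 + π ^ 2 * (m : ℝ) ^ 2 / b ^ 2 :=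
      le_add_of_nonneg_left (by positivity)

lemma mixedCount_eq_zero_of_lt_pi_div_sqrt {a b E : ℝ} (hb : 0 < b) (h : b < π / √E) :
    mixedCount a b E = 0 := by
  refine (congrArg Set.ncard (Set.eq_empty_of_forall_notMem ?_)).trans (Set.ncard_empty _)
  rintro ⟨l, m⟩ ⟨-, hm, hle⟩
  exact hle.not_gt (lt_rectEigenvalue_of_lt_pi_div_sqrt hb h l hm)

lemma dirichletCount_eq_zero_of_lt_pi_div_sqrt {a b E : ℝ} (hb : 0 < b) (h : b < π / √E) :
    dirichletCount a b E = 0 := by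
  refine (congrArg Set.ncard (Set.eq_empty_of_forall_notMem ?_)).trans (Set.ncard_empty _)
  rintro ⟨l, m⟩ ⟨-, hm, hle⟩
  exact hle.not_gt (lt_rectEigenvalue_of_lt_pi_div_sqrt hb h l hm)

lemma finite_setOf_le_of_tendsto_zero {b : ℕ → ℝ} (hlim : Tendsto b atTop (nhds 0)) {r : ℝ}
    (hr : 0 < r) : {k | r ≤ b k}.Finite := by
  have hev : ∀ᶠ k in cofinite, b k < r :=
    Nat.cofinite_eq_atTop ▸ hlim.eventually (eventually_lt_nhds hr)
  simpa only [not_lt] using Filter.eventually_cofinite.1 hev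

lemma tsum_eq_sum_Iic_sSup {α : Type*} [AddCommMonoid α] [TopologicalSpace α] {g : ℕ → α}
    {S : Set ℕ} (hS : S.Finite) (hg : ∀ k ∉ S, g k = 0) :
    ∑' k, g k = ∑ k ∈ Finset.Iic (sSup S), g k :=
  tsum_eq_sum fun k hk ↦ hg k fun hkS ↦ hk (Finset.mem_Iic.2 (le_csSup hS.bddAbove hkS))

theorem bracketing_sums_finite_general (f b : ℕ → ℝ) (hb : ∀ k, 0 < b k)
    (hlim : Tendsto b atTop (nhds 0)) (E : ℝ) (hE : 0 < E) :
    (∀ k, b k < Real.pi / Real.sqrt E → mixedCount (f k) (b k) E = 0) ∧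
    (∀ k, b k < Real.pi / Real.sqrt E → dirichletCount (f k) (b k) E = 0) ∧
    {k : ℕ | mixedCount (f k) (b k) E ≠ 0}.Finite ∧
    {k : ℕ | dirichletCount (f k) (b k) E ≠ 0}.Finite ∧
    (∑' k, (mixedCount (f k) (b k) E : ℝ)) =
      ∑ k ∈ Finset.Iic (sSup {k : ℕ | Real.pi / Real.sqrt E ≤ b k}),
        (mixedCount (f k) (b k) E : ℝ) ∧
    (∑' k, (dirichletCount (f k) (b k) E : ℝ)) =
      ∑ k ∈ Finset.Iic (sSup {k : ℕ | Real.pi / Real.sqrt E ≤ b k}),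
        (dirichletCount (f k) (b k) E : ℝ) := by
  set r := π / √E
  have hmix (k : ℕ) : b k < r → mixedCount (f k) (b k) E = 0 :=
    mixedCount_eq_zero_of_lt_pi_div_sqrt (hb k)
  have hdir (k : ℕ) : b k < r → dirichletCount (f k) (b k) E = 0 :=
    dirichletCount_eq_zero_of_lt_pi_div_sqrt (hb k)
  have hS : {k | r ≤ b k}.Finite :=
    finite_setOf_le_of_tendsto_zero hlim (div_pos Real.pi_pos (Real.sqrt_pos.2 hE))
  refine ⟨hmix, hdir, hS.subset fun k hk ↦ not_lt.1 (mt (hmix k) hk),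
    hS.subset fun k hk ↦ not_lt.1 (mt (hdir k) hk), ?_, ?_⟩
  · exact tsum_eq_sum_Iic_sSup hS fun k hk ↦ by rw [hmix k (not_le.1 hk), Nat.cast_zero]
  · exact tsum_eq_sum_Iic_sSup hS fun k hk ↦ by rw [hdir k (not_le.1 hk), Nat.cast_zero]

/-- For widths `f k ≥ c > 0` and positive heights `b k → 0`, each bracketing
series has only finitely many nonzero terms: the `k`-th summand vanishes as
soon as `b_k < π/√E`, so each series equals the finite sum over the indices up
to `n(E) = max{k : b_k ≥ π/√E}`.  In particular both Dirichlet–Neumann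
bracketing bounds for a simple domain are finite for every `E`. -/
theorem bracketing_sums_finite (f b : ℕ → ℝ) (c : ℝ) (hc : 0 < c)
    (hf : ∀ k, c ≤ f k) (hb : ∀ k, 0 < b k)
    (hlim : Tendsto b atTop (nhds 0)) (E : ℝ) (hE : 0 < E) :
    (∀ k, b k < Real.pi / Real.sqrt E → mixedCount (f k) (b k) E = 0) ∧
    (∀ k, b k < Real.pi / Real.sqrt E → dirichletCount (f k) (b k) E = 0) ∧
    {k : ℕ | mixedCount (f k) (b k) E ≠ 0}.Finite ∧
    {k : ℕ | dirichletCount (f k) (b k) E ≠ 0}.Finite ∧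
    (∑' k, (mixedCount (f k) (b k) E : ℝ)) =
      ∑ k ∈ Finset.Iic (sSup {k : ℕ | Real.pi / Real.sqrt E ≤ b k}),
        (mixedCount (f k) (b k) E : ℝ) ∧
    (∑' k, (dirichletCount (f k) (b k) E : ℝ)) =
      ∑ k ∈ Finset.Iic (sSup {k : ℕ | Real.pi / Real.sqrt E ≤ b k}),
        (dirichletCount (f k) (b k) E : ℝ) :=
  bracketing_sums_finite_general f b hb hlim E hE
end
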